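/- Let n ≥ 1, let a_0(n), a_1(n) be real numbers with 2a_0(n) + a_1(n) = 1, let f : [0,1] → ℝ be continuous, and let x ∈ [0,1]. Then |K_n^{M,1}(f;x) − f(x)| ≤ |K_n(f;x) − f(x)| + |(1 + a_1(n))(1/2 − x)|·ω₁(f; 1/(n+1)). -/

import Mathlib

open scoped BigOperators
open Set Filter MeasureTheory

/-- Bernstein fundamental function `p_{n,k}` (vanishes for `k > n` since `choose = 0`). -/
noncomputable def bp (n k : ℕ) (x : ℝ) : ℝ :=
  (n.choose k : ℝ) * x ^ k * (1 - x) ^ (n - k)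

/-- Bernstein fundamental function with integer index, vanishing for negative `k`. -/
noncomputable def bpz (n : ℕ) (k : ℤ) (x : ℝ) : ℝ :=
  if 0 ≤ k then bp n k.toNat x else 0

/-- The classical Bernstein operator `B_n`. -/
noncomputable def Bern (n : ℕ) (f : ℝ → ℝ) (x : ℝ) : ℝ :=
  ∑ k ∈ Finset.range (n + 1), bp n k x * f (k / n)

/-- Modified fundamental function `p_{n,k}^{M,1}` with `a(x,n) = a1*x + a0`. -/
noncomputable def bpM1 (a0 a1 : ℝ) (n k : ℕ) (x : ℝ) : ℝ :=
  (a1 * x + a0) * bp (n - 1) k x + (a1 * (1 - x) + a0) * bpz (n - 1) ((k : ℤ) - 1) x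

/-- The modified Bernstein operator `B_n^{M,1}`. -/
noncomputable def BernM1 (a0 a1 : ℝ) (n : ℕ) (f : ℝ → ℝ) (x : ℝ) : ℝ :=
  ∑ k ∈ Finset.range (n + 1), bpM1 a0 a1 n k x * f (k / n)

/-- Second modified fundamental function `p_{n,k}^{M,2}`. -/
noncomputable def bpM2 (n k : ℕ) (x : ℝ) : ℝ :=
  ((n : ℝ) / 2 * x ^ 2 + (-1 - (n : ℝ) / 2) * x + 1) * bp (n - 2) k x
    + (n : ℝ) * x * (1 - x) * bpz (n - 2) ((k : ℤ) - 1) x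
    + ((n : ℝ) / 2 * x ^ 2 + (-(n : ℝ) / 2 + 1) * x) * bpz (n - 2) ((k : ℤ) - 2) x

/-- The second modified Bernstein operator `B_n^{M,2}`. -/
noncomputable def BernM2 (n : ℕ) (f : ℝ → ℝ) (x : ℝ) : ℝ :=
  ∑ k ∈ Finset.range (n + 1), bpM2 n k x * f (k / n)

/-- The Kantorovich operator `K_n`. -/
noncomputable def Kan (n : ℕ) (f : ℝ → ℝ) (x : ℝ) : ℝ :=
  ((n : ℝ) + 1) * ∑ k ∈ Finset.range (n + 1),
    bp n k x * ∫ t in ((k : ℝ) / (n + 1))..(((k : ℝ) + 1) / (n + 1)), f t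

/-- The modified Kantorovich operator `K_n^{M,1}`. -/
noncomputable def KanM1 (a0 a1 : ℝ) (n : ℕ) (f : ℝ → ℝ) (x : ℝ) : ℝ :=
  ((n : ℝ) + 1) * ∑ k ∈ Finset.range (n + 1),
    bpM1 a0 a1 n k x * ∫ t in ((k : ℝ) / (n + 1))..(((k : ℝ) + 1) / (n + 1)), f t

/-- The Durrmeyer operator `D_n`. -/
noncomputable def Dur (n : ℕ) (f : ℝ → ℝ) (x : ℝ) : ℝ :=
  ((n : ℝ) + 1) * ∑ k ∈ Finset.range (n + 1),
    bp n k x * ∫ t in (0:ℝ)..1, bp n k t * f t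

/-- The modified Durrmeyer operator `D_n^{M,1}`. -/
noncomputable def DurM1 (a0 a1 : ℝ) (n : ℕ) (f : ℝ → ℝ) (x : ℝ) : ℝ :=
  ((n : ℝ) + 1) * ∑ k ∈ Finset.range (n + 1),
    bpM1 a0 a1 n k x * ∫ t in (0:ℝ)..1, bp n k t * f t

/-- The genuine Bernstein–Durrmeyer operator `U_n`. -/
noncomputable def Gen (n : ℕ) (f : ℝ → ℝ) (x : ℝ) : ℝ :=
  (1 - x) ^ n * f 0 + x ^ n * f 1 +
    ((n : ℝ) - 1) * ∑ k ∈ Finset.Icc 1 (n - 1),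
      bp n k x * ∫ t in (0:ℝ)..1, bp (n - 2) (k - 1) t * f t

/-- The modified genuine Bernstein–Durrmeyer operator `U_n^{M,1}`. -/
noncomputable def GenM1 (a0 a1 : ℝ) (n : ℕ) (f : ℝ → ℝ) (x : ℝ) : ℝ :=
  (a1 * x + a0) * (1 - x) ^ (n - 1) * f 0 + (a1 * (1 - x) + a0) * x ^ (n - 1) * f 1 +
    ((n : ℝ) - 1) * ∑ k ∈ Finset.Icc 1 (n - 1),
      bpM1 a0 a1 n k x * ∫ t in (0:ℝ)..1, bp (n - 2) (k - 1) t * f t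

/-- First modulus of continuity on `[0,1]`. -/
noncomputable def omega1 (f : ℝ → ℝ) (δ : ℝ) : ℝ :=
  sSup {y | ∃ s t : ℝ, s ∈ Icc (0:ℝ) 1 ∧ t ∈ Icc (0:ℝ) 1 ∧ |s - t| ≤ δ ∧ y = |f s - f t|}

/-- Second modulus of smoothness on `[0,1]`. -/
noncomputable def omega2 (f : ℝ → ℝ) (δ : ℝ) : ℝ :=
  sSup {y | ∃ t h : ℝ, 0 < h ∧ h ≤ δ ∧ t - h ∈ Icc (0:ℝ) 1 ∧ t + h ∈ Icc (0:ℝ) 1 ∧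
    y = |f (t + h) - 2 * f t + f (t - h)|}

/-- Sup norm on `[0,1]`. -/
noncomputable def supNorm (g : ℝ → ℝ) : ℝ :=
  sSup {y | ∃ t ∈ Icc (0:ℝ) 1, y = |g t|}

/-! The modification only moves mass between neighbouring Bernstein weights: by the Pascal recursion
`p_{n,k} = (1 - x) p_{n-1,k} + x p_{n-1,k-1}` and `2 a₀ + a₁ = 1`, one has
`p^{M,1}_{n,k} - p_{n,k} = (1 + a₁)(1/2 - x) (p_{n-1,k-1} - p_{n-1,k})`. Summing by parts,
`K_n^{M,1} f - K_n f = (1 + a₁)(1/2 - x) (n + 1) ∑ₖ p_{n-1,k} (I_{k+1} - I_k)`, where `I_k` is the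
integral of `f` over the `k`-th cell of length `1/(n+1)`. Adjacent cells are translates of each other,
so `|I_{k+1} - I_k| ≤ ω₁(f, 1/(n+1)) / (n+1)`, and the weights `p_{n-1,k}` form a partition of unity. -/

lemma bp_nonneg (n k : ℕ) {x : ℝ} (hx : x ∈ Icc (0:ℝ) 1) : 0 ≤ bp n k x := by
  have hx0 : 0 ≤ x := hx.1
  have hx1 : 0 ≤ 1 - x := sub_nonneg.2 hx.2
  unfold bp
  positivity

lemma sum_bp (n : ℕ) (x : ℝ) : ∑ k ∈ Finset.range (n + 1), bp n k x = 1 := by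
  calc ∑ k ∈ Finset.range (n + 1), bp n k x
      = ∑ k ∈ Finset.range (n + 1), x ^ k * (1 - x) ^ (n - k) * (n.choose k : ℝ) :=
        Finset.sum_congr rfl fun k _ => by unfold bp; ring
    _ = (x + (1 - x)) ^ n := (add_pow x (1 - x) n).symm
    _ = 1 := by norm_num

lemma bp_of_lt {n k : ℕ} (h : n < k) (x : ℝ) : bp n k x = 0 := by
  simp [bp, Nat.choose_eq_zero_of_lt h]

lemma bpz_natCast (n k : ℕ) (x : ℝ) : bpz n k x = bp n k x := by
  simp [bpz]

lemma bpz_neg_one (n : ℕ) (x : ℝ) : bpz n (-1) x = 0 := by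
  simp [bpz]

lemma bp_succ_zero (m : ℕ) (x : ℝ) : bp (m + 1) 0 x = (1 - x) * bp m 0 x := by
  simp only [bp, Nat.choose_zero_right, Nat.cast_one, pow_zero, mul_one, tsub_zero, pow_succ,
    one_mul]
  ring

lemma bp_succ_succ (m j : ℕ) (x : ℝ) :
    bp (m + 1) (j + 1) x = (1 - x) * bp m (j + 1) x + x * bp m j x := by
  rcases lt_trichotomy j m with hj | rfl | hj
  · obtain ⟨d, rfl⟩ := Nat.exists_eq_add_of_lt hj
    simp only [bp, Nat.choose_succ_succ, show j + d + 1 + 1 - (j + 1) = d + 1 by omega,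
      show j + d + 1 - (j + 1) = d by omega, show j + d + 1 - j = d + 1 by omega]
    push_cast
    ring
  · rw [bp_of_lt (Nat.lt_succ_self _)]
    simp only [bp, Nat.choose_self, Nat.cast_one, one_mul, tsub_self, pow_zero, mul_one]
    ring
  · simp [bp_of_lt hj, bp_of_lt (Nat.succ_lt_succ hj), bp_of_lt (hj.trans j.lt_succ_self)]

lemma bp_succ (m k : ℕ) (x : ℝ) :
    bp (m + 1) k x = (1 - x) * bp m k x + x * bpz m ((k : ℤ) - 1) x := by
  cases k with
  | zero => simp [bp_succ_zero, bpz_neg_one]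
  | succ j => simp [bp_succ_succ, bpz_natCast]

lemma bpM1_sub_bp {a0 a1 : ℝ} (ha : 2 * a0 + a1 = 1) (m k : ℕ) (x : ℝ) :
    bpM1 a0 a1 (m + 1) k x - bp (m + 1) k x
      = (1 + a1) * (1 / 2 - x) * (bpz m ((k : ℤ) - 1) x - bp m k x) := by
  rw [bp_succ, bpM1, Nat.add_sub_cancel, show a0 = (1 - a1) / 2 by linarith]
  ring

lemma sum_bpz_sub_bp_mul (m : ℕ) (x : ℝ) (I : ℕ → ℝ) :
    ∑ k ∈ Finset.range (m + 2), (bpz m ((k : ℤ) - 1) x - bp m k x) * I k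
      = ∑ k ∈ Finset.range (m + 1), bp m k x * (I (k + 1) - I k) := by
  simp only [sub_mul, Finset.sum_sub_distrib, mul_sub]
  congr 1
  · rw [Finset.sum_range_succ']
    simp [bpz_neg_one, bpz_natCast]
  · rw [Finset.sum_range_succ, bp_of_lt (Nat.lt_succ_self m), zero_mul, add_zero]

lemma sum_bpM1_mul_sub_sum_bp_mul {a0 a1 : ℝ} (ha : 2 * a0 + a1 = 1) (m : ℕ) (x : ℝ)
    (I : ℕ → ℝ) :
    ∑ k ∈ Finset.range (m + 2), bpM1 a0 a1 (m + 1) k x * I k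
        - ∑ k ∈ Finset.range (m + 2), bp (m + 1) k x * I k
      = (1 + a1) * (1 / 2 - x) * ∑ k ∈ Finset.range (m + 1), bp m k x * (I (k + 1) - I k) := by
  rw [← sum_bpz_sub_bp_mul, Finset.mul_sum, ← Finset.sum_sub_distrib]
  refine Finset.sum_congr rfl fun k _ => ?_
  rw [← sub_mul, bpM1_sub_bp ha, mul_assoc]

lemma abs_sum_bp_mul_le {m : ℕ} {x : ℝ} (hx : x ∈ Icc (0:ℝ) 1) {d : ℕ → ℝ} {B : ℝ}
    (hd : ∀ k < m + 1, |d k| ≤ B) :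
    |∑ k ∈ Finset.range (m + 1), bp m k x * d k| ≤ B := by
  calc |∑ k ∈ Finset.range (m + 1), bp m k x * d k|
      ≤ ∑ k ∈ Finset.range (m + 1), bp m k x * |d k| := by
        refine (Finset.abs_sum_le_sum_abs _ _).trans_eq (Finset.sum_congr rfl fun k _ => ?_)
        rw [abs_mul, abs_of_nonneg (bp_nonneg m k hx)]
    _ ≤ ∑ k ∈ Finset.range (m + 1), bp m k x * B :=
        Finset.sum_le_sum fun k hk =>
          mul_le_mul_of_nonneg_left (hd k (Finset.mem_range.1 hk)) (bp_nonneg m k hx)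
    _ = B := by rw [← Finset.sum_mul, sum_bp, one_mul]

lemma abs_sub_le_omega1 {f : ℝ → ℝ} (hf : ContinuousOn f (Icc 0 1)) {δ s t : ℝ}
    (hs : s ∈ Icc (0:ℝ) 1) (ht : t ∈ Icc (0:ℝ) 1) (hst : |s - t| ≤ δ) :
    |f s - f t| ≤ omega1 f δ := by
  obtain ⟨M, hM⟩ := isCompact_Icc.exists_bound_of_continuousOn hf
  refine le_csSup ⟨2 * M, ?_⟩ ⟨s, t, hs, ht, hst, rfl⟩
  rintro _ ⟨s, t, hs, ht, -, rfl⟩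
  have h1 := hM s hs
  have h2 := hM t ht
  rw [Real.norm_eq_abs] at h1 h2
  linarith [abs_sub (f s) (f t)]

lemma abs_integral_sub_integral_add_le {f : ℝ → ℝ} (hf : ContinuousOn f (Icc 0 1))
    {a b h : ℝ} (ha : 0 ≤ a) (hab : a ≤ b) (hh : 0 ≤ h) (hbh : b + h ≤ 1) :
    |(∫ t in (a + h)..(b + h), f t) - ∫ t in a..b, f t| ≤ omega1 f h * (b - a) := by
  have hIcc : ∀ t ∈ Icc a b, t ∈ Icc (0:ℝ) 1 ∧ t + h ∈ Icc (0:ℝ) 1 := fun t ht =>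
    ⟨⟨ha.trans ht.1, by linarith [ht.2]⟩, ⟨by linarith [ht.1], by linarith [ht.2]⟩⟩
  have hsub : uIcc a b ⊆ Icc (0:ℝ) 1 := by
    rw [uIcc_of_le hab]; exact fun t ht => (hIcc t ht).1
  have int_f : IntervalIntegrable f volume a b := (hf.mono hsub).intervalIntegrable
  have int_shift : IntervalIntegrable (fun t => f (t + h)) volume a b := by
    refine ContinuousOn.intervalIntegrable (hf.comp (by fun_prop) fun t ht => ?_)
    rw [uIcc_of_le hab] at ht
    exact (hIcc t ht).2
  rw [← intervalIntegral.integral_comp_add_right, ← intervalIntegral.integral_sub int_shift int_f,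
    ← abs_of_nonneg (sub_nonneg.2 hab), ← Real.norm_eq_abs, ← Real.norm_eq_abs]
  refine intervalIntegral.norm_integral_le_of_norm_le_const fun t ht => ?_
  rw [uIoc_of_le hab] at ht
  obtain ⟨ht0, hth⟩ := hIcc t (Ioc_subset_Icc_self ht)
  rw [Real.norm_eq_abs]
  exact abs_sub_le_omega1 hf hth ht0 (by simp [abs_of_nonneg hh])

noncomputable def kanCell (n : ℕ) (f : ℝ → ℝ) (k : ℕ) : ℝ :=
  ∫ t in ((k : ℝ) / (n + 1))..(((k : ℝ) + 1) / (n + 1)), f t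

lemma abs_kanCell_succ_sub_le {f : ℝ → ℝ} (hf : ContinuousOn f (Icc 0 1)) {n k : ℕ}
    (hk : k < n) :
    |kanCell n f (k + 1) - kanCell n f k| ≤ omega1 f (1 / ((n : ℝ) + 1)) / ((n : ℝ) + 1) := by
  have hn : (0 : ℝ) < n + 1 := by positivity
  have hkn : (k : ℝ) + 1 ≤ n := by exact_mod_cast hk
  have hcell : kanCell n f (k + 1) = ∫ t in ((k : ℝ) / (n + 1) + 1 / (n + 1))..
      (((k : ℝ) + 1) / (n + 1) + 1 / (n + 1)), f t := by
    rw [kanCell, Nat.cast_succ, ← add_div, ← add_div]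
  have := abs_integral_sub_integral_add_le hf (a := (k : ℝ) / (n + 1))
    (b := ((k : ℝ) + 1) / (n + 1)) (h := 1 / (n + 1)) (by positivity) (by gcongr; linarith)
    (by positivity) (by rw [← add_div, div_le_one hn]; linarith)
  rwa [← hcell, ← sub_div, add_sub_cancel_left, ← mul_div_assoc, mul_one] at this

/-- pointwise estimate for the modified Kantorovich operator `K_n^{M,1}`. -/
theorem stmt8 (n : ℕ) (hn : 1 ≤ n) (a0 a1 : ℝ) (ha : 2 * a0 + a1 = 1)
    (f : ℝ → ℝ) (hf : ContinuousOn f (Icc 0 1)) (x : ℝ) (hx : x ∈ Icc (0:ℝ) 1) :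
    |KanM1 a0 a1 n f x - f x| ≤
      |Kan n f x - f x| + |(1 + a1) * (1 / 2 - x)| * omega1 f (1 / ((n : ℝ) + 1)) := by
  obtain ⟨m, rfl⟩ : ∃ m, n = m + 1 := ⟨n - 1, by omega⟩
  set ω := omega1 f (1 / (((m + 1 : ℕ) : ℝ) + 1))
  set S := ∑ k ∈ Finset.range (m + 1), bp m k x * (kanCell (m + 1) f (k + 1) - kanCell (m + 1) f k)
  have hdiff : KanM1 a0 a1 (m + 1) f x - Kan (m + 1) f x
      = (1 + a1) * (1 / 2 - x) * ((((m + 1 : ℕ) : ℝ) + 1) * S) := by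
    rw [mul_left_comm, ← sum_bpM1_mul_sub_sum_bp_mul ha, mul_sub]
    -- `KanM1` and `Kan` unfold to `(n + 1) * ∑ₖ _ * kanCell n f k`
    rfl
  have hS : |(((m + 1 : ℕ) : ℝ) + 1) * S| ≤ ω := by
    have hpos : (0 : ℝ) < ((m + 1 : ℕ) : ℝ) + 1 := by positivity
    rw [abs_mul, abs_of_pos hpos, ← le_div_iff₀' hpos]
    exact abs_sum_bp_mul_le hx fun k hk => abs_kanCell_succ_sub_le hf hk
  calc |KanM1 a0 a1 (m + 1) f x - f x|
      ≤ |Kan (m + 1) f x - f x| + |KanM1 a0 a1 (m + 1) f x - Kan (m + 1) f x| :=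
        (abs_sub_le _ _ _).trans_eq (add_comm _ _)
    _ ≤ |Kan (m + 1) f x - f x| + |(1 + a1) * (1 / 2 - x)| * ω := by
        rw [hdiff, abs_mul]
        gcongr
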